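/- Let q ∈ ℂ with q ≠ 0, let n ∈ ℕ, and let k, m ∈ {0,…,n}. Then ∑_{r=0}^{n} (-1)^{n-r} · C(n-k, n-r)_q · q^{-r(n-r)} · q^{-(r-m)(r-m-1)/2} · C(r, m)_{q⁻¹} = q^{e} · C(k, n-m)_q, where e ∈ ℤ is the integer e = (k+m-n)(k+m-n-1)/2 − k(k-1)/2 (computed with integer arithmetic; (t)(t-1)/2 is a nonnegative integer for every t ∈ ℤ) and all powers of q are integer powers. -/

import Mathlib

/-- The Gaussian ($q$-)binomial coefficient `C(n,k)_q`, defined by the recursion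
`C(n+1,k)_q = C(n,k-1)_q + q^k * C(n,k)_q`, with `C(n,0)_q = C(n,n)_q = 1` and
`C(n,k)_q = 0` for `k > n`. -/
noncomputable def qBinom (q : ℂ) : ℕ → ℕ → ℂ
  | 0, 0 => 1
  | 0, _ + 1 => 0
  | _ + 1, 0 => 1
  | n + 1, k + 1 => qBinom q n k + q ^ (k + 1) * qBinom q n (k + 1)

/-- The matrix `σ₁(q,n)` with entries `σ₁(q,n)_{km} = C(n-k, n-m)_q`. -/
noncomputable def sigma1 (q : ℂ) (n : ℕ) : Matrix (Fin (n + 1)) (Fin (n + 1)) ℂ :=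
  fun k m => qBinom q (n - k.val) (n - m.val)

/-- The matrix `σ₂(q,n)` with entries
`σ₂(q,n)_{km} = (-1)^{k+m} q^{-(k-m)(k-m-1)/2} C(k,m)_{q⁻¹}` for `m ≤ k`, and `0` otherwise. -/
noncomputable def sigma2 (q : ℂ) (n : ℕ) : Matrix (Fin (n + 1)) (Fin (n + 1)) ℂ :=
  fun k m =>
    if m.val ≤ k.val then
      (-1 : ℂ) ^ (k.val + m.val) *
        q ^ (-(((k.val - m.val) * (k.val - m.val - 1) / 2 : ℕ) : ℤ)) *
        qBinom q⁻¹ k.val m.val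
    else 0

/-- The matrix `S(q)` with entries `S(q)_{km} = (-1)^k q^{-k(k-1)/2}` when `k+m = n`,
and `0` otherwise. -/
noncomputable def Smat (q : ℂ) (n : ℕ) : Matrix (Fin (n + 1)) (Fin (n + 1)) ℂ :=
  fun k m =>
    if k.val + m.val = n then (-1 : ℂ) ^ k.val * q ^ (-((k.val * (k.val - 1) / 2 : ℕ) : ℤ))
    else 0

/-- `A^♯`, the matrix with entries `(A^♯)_{ij} = A_{n-i, n-j}`. -/
noncomputable def msharp {n : ℕ} (A : Matrix (Fin (n + 1)) (Fin (n + 1)) ℂ) :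
    Matrix (Fin (n + 1)) (Fin (n + 1)) ℂ :=
  fun i j => A i.rev j.rev

/-!
Since `C(r,m)_{q⁻¹} = q^{-m(r-m)} C(r,m)_q`, after the substitution `r ↦ n - r` every summand is
one fixed power of `q` times `(-1)^j q^{j(j-1)/2} C(n-k,j)_q C(n-j,m)_q`. This alternating sum is a
q-analogue of `∑ⱼ (-1)^j C(a,j) C(n-j,m) = C(n-a, n-m)` (here `a = n - k`); it is evaluated by
induction on `a`, splitting `C(a+1,j+1)_q` by the second q-Pascal rule
`C(a+1,j+1)_q = q^{a-j} C(a,j)_q + C(a,j+1)_q`.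
-/

section

variable (q : ℂ)

theorem qBinom_zero_right (n : ℕ) : qBinom q n 0 = 1 := by
  cases n <;> rfl

theorem qBinom_succ_succ (n k : ℕ) :
    qBinom q (n + 1) (k + 1) = qBinom q n k + q ^ (k + 1) * qBinom q n (k + 1) := rfl

theorem qBinom_eq_zero_of_lt {n k : ℕ} (h : n < k) : qBinom q n k = 0 := by
  induction n generalizing k with
  | zero => obtain ⟨k, rfl⟩ := Nat.exists_eq_add_one.mpr h; rfl
  | succ n ih =>
    obtain ⟨k, rfl⟩ := Nat.exists_eq_add_one.mpr (Nat.zero_lt_of_lt h)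
    rw [qBinom_succ_succ, ih (by omega), ih (by omega), mul_zero, add_zero]

theorem qBinom_self (n : ℕ) : qBinom q n n = 1 := by
  induction n with
  | zero => rfl
  | succ n ih =>
    rw [qBinom_succ_succ, ih, qBinom_eq_zero_of_lt q n.lt_succ_self, mul_zero, add_zero]

theorem qBinom_succ_succ' (n k : ℕ) :
    qBinom q (n + 1) (k + 1) = q ^ (n - k) * qBinom q n k + qBinom q n (k + 1) := by
  induction n generalizing k with
  | zero => cases k <;> simp [qBinom]
  | succ n ih =>
    cases k with
    | zero =>
      have h₁ := qBinom_succ_succ q (n + 1) 0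
      have h₂ := qBinom_succ_succ q n 0
      have h₃ := ih 0
      simp only [qBinom_zero_right, Nat.sub_zero, zero_add, pow_one] at h₁ h₂ h₃ ⊢
      linear_combination h₁ + q * h₃ - h₂
    | succ k =>
      have hpow : q ^ (k + 2) * q ^ (n - (k + 1)) * qBinom q n (k + 1) =
          q ^ (n - k) * q ^ (k + 1) * qBinom q n (k + 1) := by
        rcases le_or_gt (k + 1) n with h | h
        · rw [← pow_add, ← pow_add, show k + 2 + (n - (k + 1)) = n - k + (k + 1) by omega]
        · rw [qBinom_eq_zero_of_lt q h, mul_zero, mul_zero]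
      rw [Nat.add_sub_add_right]
      linear_combination qBinom_succ_succ q (n + 1) (k + 1) + ih k + q ^ (k + 2) * ih (k + 1)
        - q ^ (n - k) * qBinom_succ_succ q n k - qBinom_succ_succ q n (k + 1) + hpow

theorem qBinom_symm_add (a b : ℕ) : qBinom q (a + b) a = qBinom q (a + b) b := by
  induction a generalizing b with
  | zero => rw [zero_add, qBinom_zero_right, qBinom_self]
  | succ a iha =>
    induction b with
    | zero => rw [add_zero, qBinom_zero_right, qBinom_self]
    | succ b ihb =>
      have h₁ : qBinom q (a + b + 1) a = qBinom q (a + b + 1) (b + 1) := iha (b + 1)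
      have h₂ : qBinom q (a + b + 1) (a + 1) = qBinom q (a + b + 1) b := by
        rw [Nat.add_right_comm]; exact ihb
      rw [show a + 1 + (b + 1) = a + b + 1 + 1 by ring, qBinom_succ_succ,
        qBinom_succ_succ' q (a + b + 1) b, h₁, h₂, show a + b + 1 - b = a + 1 by omega]
      ring

theorem qBinom_inv (hq : q ≠ 0) (n k : ℕ) :
    qBinom q⁻¹ n k = q ^ (-(k * ((n : ℤ) - k))) * qBinom q n k := by
  induction n generalizing k with
  | zero => cases k <;> simp [qBinom]
  | succ n ih =>
    cases k with
    | zero => simp [qBinom_zero_right]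
    | succ k =>
      rcases lt_or_ge n k with h | h
      · rw [qBinom_eq_zero_of_lt _ (by omega), qBinom_eq_zero_of_lt _ (by omega), mul_zero]
      · have e₁ : q ^ (-((k + 1 : ℕ) * ((n + 1 : ℕ) - (k + 1 : ℕ) : ℤ))) * q ^ (n - k) =
            q ^ (-(k * ((n : ℤ) - k))) := by
          rw [← zpow_natCast, ← zpow_add₀ hq]; push_cast [h]; ring_nf
        have e₂ : q ^ (-((k + 1 : ℕ) * ((n + 1 : ℕ) - (k + 1 : ℕ) : ℤ))) =
            q⁻¹ ^ (k + 1) * q ^ (-((k + 1 : ℕ) * ((n : ℤ) - (k + 1 : ℕ)))) := by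
          rw [inv_pow, ← zpow_natCast, ← zpow_neg, ← zpow_add₀ hq]; push_cast; ring_nf
        rw [qBinom_succ_succ, qBinom_succ_succ', ih, ih]
        linear_combination (-qBinom q n k) * e₁ - qBinom q n (k + 1) * e₂

theorem alternating_sum_qBinom_mul_qBinom (a k l m n : ℕ) (hk : a + k = n) (hl : m + l = n) :
    ∑ j ∈ Finset.range (n + 1), (-1 : ℂ) ^ j * q ^ j.choose 2 * qBinom q a j * qBinom q (n - j) m =
      q ^ (a * l) * qBinom q k l := by
  induction a generalizing k l n with
  | zero =>
    rw [zero_add] at hk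
    subst hk hl
    rw [Finset.sum_range_succ', Finset.sum_eq_zero fun j _ => by rw [qBinom, mul_zero, zero_mul]]
    simpa [qBinom_zero_right] using qBinom_symm_add q m l
  | succ a ih =>
    obtain ⟨n, rfl⟩ : ∃ n', n = n' + 1 := ⟨a + k, by omega⟩
    have hterm : ∀ i, (-1 : ℂ) ^ (i + 1) * q ^ (i + 1).choose 2 * qBinom q (a + 1) (i + 1) *
          qBinom q (n + 1 - (i + 1)) m =
        -q ^ a * ((-1 : ℂ) ^ i * q ^ i.choose 2 * qBinom q a i * qBinom q (n - i) m) +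
          (-1 : ℂ) ^ (i + 1) * q ^ (i + 1).choose 2 * qBinom q a (i + 1) *
            qBinom q (n + 1 - (i + 1)) m := by
      intro i
      have hpow : q ^ i * q ^ (a - i) * qBinom q a i = q ^ a * qBinom q a i := by
        rcases le_or_gt i a with h | h
        · rw [← pow_add, Nat.add_sub_cancel' h]
        · rw [qBinom_eq_zero_of_lt q h, mul_zero, mul_zero]
      rw [qBinom_succ_succ', Nat.choose_succ_succ', Nat.choose_one_right, Nat.add_sub_add_right]
      linear_combination (-1 : ℂ) ^ (i + 1) * q ^ i.choose 2 * qBinom q (n - i) m * hpow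
    have hsplit :
        ∑ j ∈ Finset.range (n + 1 + 1),
            (-1 : ℂ) ^ j * q ^ j.choose 2 * qBinom q (a + 1) j * qBinom q (n + 1 - j) m =
          -q ^ a * ∑ i ∈ Finset.range (n + 1),
              (-1 : ℂ) ^ i * q ^ i.choose 2 * qBinom q a i * qBinom q (n - i) m +
            ∑ j ∈ Finset.range (n + 1 + 1),
              (-1 : ℂ) ^ j * q ^ j.choose 2 * qBinom q a j * qBinom q (n + 1 - j) m := by
      simp only [Finset.sum_range_succ' _ (n + 1), hterm, Finset.sum_add_distrib, Finset.mul_sum,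
        qBinom_zero_right]
      ring
    rw [hsplit, ih (k + 1) l (n + 1) (by omega) hl]
    cases l with
    | zero =>
      rw [Finset.sum_eq_zero fun i hi => by
        rw [qBinom_eq_zero_of_lt q (show n - i < m by omega), mul_zero]]
      simp [qBinom_zero_right]
    | succ l =>
      rw [ih k l n (by omega) (by omega), qBinom_succ_succ]
      ring

theorem natCast_choose_two_eq_ediv (n : ℕ) : ((n.choose 2 : ℕ) : ℤ) = n * ((n : ℤ) - 1) / 2 := by
  rw [Nat.choose_two_right, Int.natCast_ediv]
  cases n with
  | zero => rfl
  | succ n => push_cast; ring_nf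

theorem qBinom_convolution_summand_eq (hq : q ≠ 0) {a n m r : ℕ} (hr : r ≤ n) :
    (-1 : ℂ) ^ (n - r) * qBinom q a (n - r) * q ^ (-((r * (n - r) : ℕ) : ℤ)) *
        q ^ (-((((r : ℤ) - (m : ℤ)) * ((r : ℤ) - (m : ℤ) - 1)) / 2)) * qBinom q⁻¹ r m =
      q ^ (-((((n : ℤ) - m) * ((n : ℤ) - m - 1)) / 2) - m * ((n : ℤ) - m)) *
        ((-1 : ℂ) ^ (n - r) * q ^ (n - r).choose 2 * qBinom q a (n - r) *
          qBinom q (n - (n - r)) m) := by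
  have key : q ^ (-((r * (n - r) : ℕ) : ℤ)) *
        q ^ (-((((r : ℤ) - (m : ℤ)) * ((r : ℤ) - (m : ℤ) - 1)) / 2)) *
        q ^ (-(m * ((r : ℤ) - m))) =
      q ^ (-((((n : ℤ) - m) * ((n : ℤ) - m - 1)) / 2) - m * ((n : ℤ) - m)) *
        q ^ (n - r).choose 2 := by
    rw [← zpow_natCast, ← zpow_add₀ hq, ← zpow_add₀ hq, ← zpow_add₀ hq, natCast_choose_two_eq_ediv]
    congr 1
    have h₁ := Int.two_mul_ediv_two_of_even (Int.even_mul_pred_self ((r : ℤ) - m))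
    have h₂ := Int.two_mul_ediv_two_of_even (Int.even_mul_pred_self ((n : ℤ) - m))
    have h₃ := Int.two_mul_ediv_two_of_even (Int.even_mul_pred_self ((n - r : ℕ) : ℤ))
    push_cast [hr] at h₃ ⊢
    -- the exponents are halves of quadratics; doubled, they become polynomial identities
    apply mul_left_cancel₀ (two_ne_zero' ℤ)
    linear_combination h₂ - h₁ - h₃
  rw [qBinom_inv q hq, Nat.sub_sub_self hr]
  linear_combination (-1 : ℂ) ^ (n - r) * qBinom q a (n - r) * qBinom q r m * key

end

/-- For `q ≠ 0` and `k, m ≤ n`,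
`∑_{r=0}^{n} (-1)^{n-r} C(n-k,n-r)_q q^{-r(n-r)} q^{-(r-m)(r-m-1)/2} C(r,m)_{q⁻¹}
  = q^{(k+m-n)(k+m-n-1)/2 - k(k-1)/2} C(k, n-m)_q`. -/
theorem qBinom_convolution_identity (n : ℕ) (q : ℂ) (hq : q ≠ 0)
    (k m : ℕ) (hk : k ≤ n) (hm : m ≤ n) :
    ∑ r ∈ Finset.range (n + 1),
        (-1 : ℂ) ^ (n - r) * qBinom q (n - k) (n - r) *
          q ^ (-((r * (n - r) : ℕ) : ℤ)) *
          q ^ (-((((r : ℤ) - (m : ℤ)) * ((r : ℤ) - (m : ℤ) - 1)) / 2)) *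
          qBinom q⁻¹ r m
      = q ^ ((((k : ℤ) + (m : ℤ) - (n : ℤ)) * ((k : ℤ) + (m : ℤ) - (n : ℤ) - 1)) / 2
            - ((k : ℤ) * ((k : ℤ) - 1)) / 2) *
          qBinom q k (n - m) := by
  have hreflect := Finset.sum_range_reflect (fun j => (-1 : ℂ) ^ j * q ^ j.choose 2 *
    qBinom q (n - k) j * qBinom q (n - j) m) (n + 1)
  simp only [Nat.add_sub_cancel] at hreflect
  rw [Finset.sum_congr rfl fun r hr =>
      qBinom_convolution_summand_eq q hq (Finset.mem_range_succ_iff.mp hr),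
    ← Finset.mul_sum, hreflect,
    alternating_sum_qBinom_mul_qBinom q (n - k) k (n - m) m n (by omega) (by omega),
    ← mul_assoc, ← zpow_natCast, ← zpow_add₀ hq]
  congr 2
  have h₁ := Int.two_mul_ediv_two_of_even (Int.even_mul_pred_self ((k : ℤ) + m - n))
  have h₂ := Int.two_mul_ediv_two_of_even (Int.even_mul_pred_self (k : ℤ))
  have h₃ := Int.two_mul_ediv_two_of_even (Int.even_mul_pred_self ((n : ℤ) - m))
  push_cast [hk, hm]
  apply mul_left_cancel₀ (two_ne_zero' ℤ)
  linear_combination h₂ - h₁ - h₃
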